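/- arXiv:1611.09136 — 5 statements merged into one kernel-verified Lean document; each statement's English description precedes it below -/
import Mathlib

section
/- Let R = F_2[x_1, ..., x_k] and for each i ≥ 0 let Q_i : R → R be the F_2-linear derivation determined by Q_i(x_j) = x_j^{2^{i+1}}. Then for m ≤ n, the composite Q_n Q_{n-1} ⋯ Q_1 Q_0 applied to the product x_1 x_2 ⋯ x_m is zero. -/
/-!
Over a ring of characteristic 2 every derivation kills squares, so it is linear over them. Let
`F s` be the span of the products `g * x_{j₁} ⋯ x_{jₜ}` with `g` a square and `t ≤ s` distinct
variables. A derivation sending each variable to a square — such as every `Q i` — maps `F (s + 1)`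
into `F s` by the Leibniz rule, and kills `F 0`. Hence `Q_{n-1} ⋯ Q_0` maps `x_1 ⋯ x_m ∈ F m` into
`F (m - n) = F 0`, which `Q_n` kills.
-/

open MvPolynomial

/-- The composite `Q n ∘ Q (n-1) ∘ ⋯ ∘ Q 0`. -/
def compQ {A : Type*} (Q : ℕ → A → A) : ℕ → A → A
  | 0 => Q 0
  | n + 1 => Q (n + 1) ∘ compQ Q n

open Finset

variable {R A ι : Type*} [CommSemiring R] [CommSemiring A] [Algebra R A]

namespace Derivation

theorem leibniz_finset_prod {M : Type*} [AddCommMonoid M] [Module A M] [Module R M]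
    [DecidableEq ι] (D : Derivation R A M) (x : ι → A) (T : Finset ι) :
    D (∏ i ∈ T, x i) = ∑ j ∈ T, (∏ i ∈ T.erase j, x i) • D (x j) := by
  induction T using Finset.induction_on with
  | empty => simp
  | insert a T ha ih =>
    have herase : ∀ j ∈ T, (insert a T).erase j = insert a (T.erase j) := fun j hj =>
      erase_insert_of_ne (ne_of_mem_of_not_mem hj ha).symm
    rw [prod_insert ha, leibniz, ih, sum_insert ha, erase_insert ha, smul_sum, add_comm]
    congr 1
    refine sum_congr rfl fun j hj => ?_
    rw [herase j hj, prod_insert (fun h => ha (mem_of_mem_erase h)), mul_smul]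

theorem map_eq_zero_of_isSquare [CharP A 2] (D : Derivation R A A) {g : A} (hg : IsSquare g) :
    D g = 0 := by
  obtain ⟨r, rfl⟩ := hg
  rw [leibniz, CharTwo.add_self_eq_zero]

end Derivation

variable (R) in
/-- `F s` in the header: squares times products of at most `s` distinct variables. -/
def sqMulMonomialSpan (x : ι → A) (s : ℕ) : Submodule R A :=
  Submodule.span R {f | ∃ g T, IsSquare g ∧ #T ≤ s ∧ f = g * ∏ i ∈ T, x i}

namespace sqMulMonomialSpan

variable {x : ι → A}

theorem mono {s t : ℕ} (h : s ≤ t) : sqMulMonomialSpan R x s ≤ sqMulMonomialSpan R x t :=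
  Submodule.span_mono fun _ ⟨g, T, hg, hT, hf⟩ => ⟨g, T, hg, hT.trans h, hf⟩

variable [CharP A 2]

theorem derivation_eq_zero (D : Derivation R A A) {f : A} (hf : f ∈ sqMulMonomialSpan R x 0) :
    D f = 0 := by
  induction hf using Submodule.span_induction with
  | mem f hf =>
    obtain ⟨g, T, hg, hT, rfl⟩ := hf
    rw [card_eq_zero.mp (Nat.le_zero.mp hT), prod_empty, mul_one]
    exact D.map_eq_zero_of_isSquare hg
  | zero => exact D.map_zero
  | add f f' _ _ hf hf' => rw [map_add, hf, hf', add_zero]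
  | smul c f _ hf => rw [D.map_smul, hf, smul_zero]

theorem derivation_mem (D : Derivation R A A) (hD : ∀ j, IsSquare (D (x j))) {s : ℕ} {f : A}
    (hf : f ∈ sqMulMonomialSpan R x (s + 1)) : D f ∈ sqMulMonomialSpan R x s := by
  classical
  induction hf using Submodule.span_induction with
  | mem f hf =>
    obtain ⟨g, T, hg, hT, rfl⟩ := hf
    rw [D.leibniz, D.map_eq_zero_of_isSquare hg, smul_zero, add_zero, D.leibniz_finset_prod,
      smul_sum]
    refine Submodule.sum_mem _ fun j hj => Submodule.subset_span ?_
    refine ⟨g * D (x j), T.erase j, hg.mul (hD j), ?_, by rw [smul_eq_mul, smul_eq_mul]; ring⟩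
    rw [card_erase_of_mem hj]
    omega
  | zero => rw [D.map_zero]; exact Submodule.zero_mem _
  | add f f' _ _ hf hf' => rw [D.map_add]; exact Submodule.add_mem _ hf hf'
  | smul c f _ hf => rw [D.map_smul]; exact Submodule.smul_mem _ c hf

variable {Q : ℕ → Derivation R A A}

theorem compQ_mem (hQ : ∀ i j, IsSquare (Q i (x j))) (n : ℕ) {s : ℕ} {f : A}
    (hf : f ∈ sqMulMonomialSpan R x (s + n + 1)) :
    compQ (fun i f => Q i f) n f ∈ sqMulMonomialSpan R x s := by
  induction n generalizing s with
  | zero => exact derivation_mem (Q 0) (hQ 0) hf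
  | succ n ih =>
    have hf' : f ∈ sqMulMonomialSpan R x (s + 1 + n + 1) := by convert hf using 2; omega
    exact derivation_mem (Q (n + 1)) (hQ (n + 1)) (ih hf')

theorem compQ_eq_zero (hQ : ∀ i j, IsSquare (Q i (x j))) {n s : ℕ} (hsn : s ≤ n) {f : A}
    (hf : f ∈ sqMulMonomialSpan R x s) :
    compQ (fun i f => Q i f) n f = 0 := by
  have hf : f ∈ sqMulMonomialSpan R x n := mono hsn hf
  cases n with
  | zero => exact derivation_eq_zero (Q 0) hf
  | succ n => exact derivation_eq_zero (Q (n + 1)) (compQ_mem hQ n (by rwa [zero_add]))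

end sqMulMonomialSpan

theorem stmt_5 (k n m : ℕ) (hmn : m ≤ n) (hmk : m ≤ k)
    (Q : ℕ → Derivation (ZMod 2) (MvPolynomial (Fin k) (ZMod 2))
      (MvPolynomial (Fin k) (ZMod 2)))
    (hQ : ∀ (i : ℕ) (j : Fin k), Q i (X j) = X j ^ 2 ^ (i + 1)) :
    compQ (fun i f => Q i f) n (∏ i : Fin m, X (Fin.castLE hmk i)) = 0 := by
  have hQ_sq : ∀ i j, IsSquare (Q i (X j)) := fun i j => by
    rw [hQ, pow_succ, pow_mul]
    exact IsSquare.sq _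
  have hmem : ∏ i : Fin m, X (Fin.castLE hmk i) ∈
      sqMulMonomialSpan (ZMod 2) (X : Fin k → MvPolynomial (Fin k) (ZMod 2)) m := by
    refine Submodule.subset_span ⟨1, univ.map (Fin.castLEEmb hmk), IsSquare.one, ?_, ?_⟩
    · rw [card_map, card_univ, Fintype.card_fin]
    · rw [one_mul, prod_map]
      rfl
  exact sqMulMonomialSpan.compQ_eq_zero hQ_sq hmn hmem
end

section
/- Let R = F_2[x_1, ..., x_k] and for each i ≥ 0 let Q_i : R → R be the F_2-linear derivation determined by Q_i(x_j) = x_j^{2^{i+1}}. Then for n+1 ≤ m ≤ k, the composite Q_n Q_{n-1} ⋯ Q_1 Q_0 applied to x_1 x_2 ⋯ x_m equals the sum, over all bijections (j_1, ..., j_m) from {1,...,m} to the multiset {2^{n+1}, 2^n, ..., 2, 1, ..., 1} (with m−(n+1) ones), of the monomial x_1^{j_1} x_2^{j_2} ⋯ x_m^{j_m}. -/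
/-!
Each `Q i` kills even powers of the variables (in characteristic 2, `D (a ^ 2l) = 2l • …`), so
on a monomial whose exponents are all `1` or even, `Q i` is a sum over the variables of exponent
`1`, each in turn raised to `2 ^ (i + 1)`. Starting from `x₁ ⋯ x_m` and applying `Q₀, …, Qₙ`, the
terms are therefore indexed by the injections `Fin (n + 1) → Fin m` listing which variable was
raised at each step, and appending the variable raised by `Q r` to an injection of length `r`
is a bijection onto the injections of length `r + 1`.
-/

open MvPolynomial

open Finset Function

namespace Derivation

variable {R A : Type*} [CommSemiring R] [CommSemiring A] [Algebra R A] (D : Derivation R A A)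

theorem leibniz_prod {ι : Type*} [DecidableEq ι] (s : Finset ι) (f : ι → A) :
    D (∏ i ∈ s, f i) = ∑ i ∈ s, (∏ j ∈ s.erase i, f j) * D (f i) := by
  induction s using Finset.induction_on with
  | empty => simp
  | @insert a s ha ih =>
    rw [prod_insert ha, leibniz, ih, sum_insert ha, erase_insert ha, smul_eq_mul, smul_eq_mul,
      mul_sum, add_comm]
    congr 1
    refine sum_congr rfl fun i hi => ?_
    rw [erase_insert_of_ne (ne_of_mem_of_not_mem hi ha).symm,
      prod_insert (fun h => ha (mem_of_mem_erase h)), mul_assoc]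

theorem map_pow_of_even [CharP A 2] (a : A) {e : ℕ} (he : Even e) : D (a ^ e) = 0 := by
  obtain ⟨l, rfl⟩ := he
  rw [leibniz_pow, add_smul, CharTwo.add_self_eq_zero]

theorem map_prod_pow_of_eq_one_or_even [CharP A 2] {ι : Type*} [Fintype ι] [DecidableEq ι]
    (x : ι → A) {N : ℕ} (hD : ∀ j, D (x j) = x j ^ N) (e : ι → ℕ)
    (he : ∀ j, e j = 1 ∨ Even (e j)) :
    D (∏ j, x j ^ e j) = ∑ j ∈ univ.filter (e · = 1), ∏ j', x j' ^ update e j N j' := by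
  rw [leibniz_prod, sum_filter]
  refine sum_congr rfl fun j _ => ?_
  split_ifs with hj
  · rw [hj, pow_one, hD, ← prod_erase_mul univ _ (mem_univ j), update_self]
    congr 1
    exact prod_congr rfl fun j' hj' => by rw [update_of_ne (ne_of_mem_erase hj')]
  · rw [D.map_pow_of_even _ ((he j).resolve_left hj), mul_zero]

end Derivation

section injExponent

variable {α : Type*} [DecidableEq α] {r : ℕ} {g : Fin r → α} {j : α}

/-- Encodes the paper's exponent assignments: `g t` is the variable receiving `2 ^ (t + 1)`.
Meaningful only for injective `g`. -/
noncomputable def injExponent (g : Fin r → α) (j : α) : ℕ :=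
  if h : ∃ t, g t = j then 2 ^ ((h.choose : ℕ) + 1) else 1

theorem injExponent_of_eq (hg : Injective g) {t : Fin r} (h : g t = j) :
    injExponent g j = 2 ^ ((t : ℕ) + 1) := by
  have h' : ∃ t, g t = j := ⟨t, h⟩
  rw [injExponent, dif_pos h', hg (h'.choose_spec.trans h.symm)]

theorem injExponent_of_notMem_range (h : j ∉ Set.range g) : injExponent g j = 1 :=
  dif_neg h

theorem injExponent_eq_one_iff (hg : Injective g) : injExponent g j = 1 ↔ j ∉ Set.range g := by
  refine ⟨?_, injExponent_of_notMem_range⟩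
  rintro h1 ⟨t, ht⟩
  rw [injExponent_of_eq hg ht] at h1
  exact (Nat.one_lt_two_pow (Nat.succ_ne_zero _)).ne' h1

theorem injExponent_eq_one_or_even (hg : Injective g) (j : α) :
    injExponent g j = 1 ∨ Even (injExponent g j) := by
  by_cases h : j ∈ Set.range g
  · obtain ⟨t, ht⟩ := h
    rw [injExponent_of_eq hg ht]
    exact .inr ((Nat.even_pow' (Nat.succ_ne_zero _)).mpr even_two)
  · exact .inl (injExponent_of_notMem_range h)

theorem injExponent_snoc (hg : Injective g) (hj : j ∉ Set.range g) :
    injExponent (Fin.snoc g j : Fin (r + 1) → α) = update (injExponent g) j (2 ^ (r + 1)) := by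
  have hsnoc : Injective (Fin.snoc g j : Fin (r + 1) → α) := Fin.snoc_injective_of_injective hg hj
  funext j'
  rcases eq_or_ne j' j with rfl | hne
  · rw [update_self, injExponent_of_eq hsnoc (Fin.snoc_last _ _), Fin.val_last]
  · rw [update_of_ne hne]
    by_cases h : j' ∈ Set.range g
    · obtain ⟨t, ht⟩ := h
      rw [injExponent_of_eq hg ht, injExponent_of_eq hsnoc (t := t.castSucc)
        (by rw [Fin.snoc_castSucc, ht]), Fin.val_castSucc]
    · rw [injExponent_of_notMem_range h, injExponent_of_notMem_range]
      rintro ⟨t, ht⟩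
      induction t using Fin.lastCases with
      | last => exact hne (Fin.snoc_last (α := fun _ => α) _ _ ▸ ht).symm
      | cast t => exact h ⟨t, by rwa [Fin.snoc_castSucc] at ht⟩

end injExponent

theorem Fin.sum_injective_snoc {α M : Type*} [Fintype α] [DecidableEq α] [AddCommMonoid M]
    {r : ℕ} (f : (Fin (r + 1) → α) → M) :
    ∑ g ∈ univ.filter (fun g : Fin r → α => Injective g),
        ∑ a ∈ univ.filter (· ∉ Set.range g), f (Fin.snoc g a) =
      ∑ g ∈ univ.filter (fun g : Fin (r + 1) → α => Injective g), f g := by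
  rw [sum_filter, sum_filter, ← (Fin.snocEquiv fun _ => α).sum_comp, Fintype.sum_prod_type_right]
  refine sum_congr rfl fun g _ => ?_
  simp only [Fin.snocEquiv, Equiv.coe_fn_mk, Fin.snoc_injective_iff, ite_and, sum_filter]
  split_ifs <;> simp

section

variable {A ι : Type*} [CommSemiring A] [Fintype ι] [DecidableEq ι]

theorem prod_eq_sum_prod_pow_injExponent_fin_zero (x : ι → A) :
    ∏ j, x j = ∑ g ∈ univ.filter (fun g : Fin 0 → ι => Injective g),
      ∏ j, x j ^ injExponent g j := by
  rw [filter_true_of_mem fun g _ => injective_of_subsingleton g]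
  simp [injExponent]

theorem Derivation.map_sum_prod_pow_injExponent {R : Type*} [CommSemiring R] [Algebra R A]
    [CharP A 2] (D : Derivation R A A) {r : ℕ} (x : ι → A)
    (hD : ∀ j, D (x j) = x j ^ 2 ^ (r + 1)) :
    D (∑ g ∈ univ.filter (fun g : Fin r → ι => Injective g), ∏ j, x j ^ injExponent g j) =
      ∑ g ∈ univ.filter (fun g : Fin (r + 1) → ι => Injective g), ∏ j, x j ^ injExponent g j := by
  rw [map_sum, ← Fin.sum_injective_snoc]
  refine sum_congr rfl fun g hg => ?_
  have hg : Injective g := (mem_filter.mp hg).2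
  rw [D.map_prod_pow_of_eq_one_or_even x hD _ (injExponent_eq_one_or_even hg)]
  refine sum_congr (filter_congr fun j _ => injExponent_eq_one_iff hg) fun j hj => ?_
  rw [injExponent_snoc hg (mem_filter.mp hj).2]

end

theorem stmt_6_general (k n m : ℕ) (hmk : m ≤ k)
    (Q : ℕ → Derivation (ZMod 2) (MvPolynomial (Fin k) (ZMod 2))
      (MvPolynomial (Fin k) (ZMod 2)))
    (hQ : ∀ (i : ℕ) (j : Fin k), Q i (X j) = X j ^ 2 ^ (i + 1)) :
    compQ (fun i f => Q i f) n (∏ i : Fin m, X (Fin.castLE hmk i))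
      = ∑ g ∈ Finset.univ.filter
          (fun g : Fin (n + 1) → Fin m => Function.Injective g),
          ∏ j : Fin m,
            X (Fin.castLE hmk j) ^
              (if h : ∃ t : Fin (n + 1), g t = j then 2 ^ ((h.choose : ℕ) + 1) else 1) := by
  induction n with
  | zero =>
    rw [prod_eq_sum_prod_pow_injExponent_fin_zero]
    exact (Q 0).map_sum_prod_pow_injExponent _ fun _ => hQ 0 _
  | succ n ih =>
    exact (congrArg (Q (n + 1)) ih).trans
      ((Q (n + 1)).map_sum_prod_pow_injExponent _ fun _ => hQ (n + 1) _)

/-- For `n+1 ≤ m ≤ k`, `Qₙ ⋯ Q₀ (x₁ ⋯ x_m)` is the sum over all ways of assigning, for each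
`s = 1, …, n+1`, the exponent `2^s` to a distinct variable among `x₁, …, x_m` (encoded by an
injection `g : Fin (n+1) → Fin m`, where `g t` receives exponent `2^(t+1)`), all remaining
variables receiving exponent `1`, of the corresponding monomial. -/
theorem stmt_6 (k n m : ℕ) (hnm : n + 1 ≤ m) (hmk : m ≤ k)
    (Q : ℕ → Derivation (ZMod 2) (MvPolynomial (Fin k) (ZMod 2))
      (MvPolynomial (Fin k) (ZMod 2)))
    (hQ : ∀ (i : ℕ) (j : Fin k), Q i (X j) = X j ^ 2 ^ (i + 1)) :
    compQ (fun i f => Q i f) n (∏ i : Fin m, X (Fin.castLE hmk i))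
      = ∑ g ∈ Finset.univ.filter
          (fun g : Fin (n + 1) → Fin m => Function.Injective g),
          ∏ j : Fin m,
            X (Fin.castLE hmk j) ^
              (if h : ∃ t : Fin (n + 1), g t = j then 2 ^ ((h.choose : ℕ) + 1) else 1) :=
  stmt_6_general k n m hmk Q hQ
end

section
/- Let R = F_2[x_1, ..., x_k] with k ≥ n+1, and for each i let Q_i : R → R be the F_2-linear derivation with Q_i(x_j) = x_j^{2^{i+1}}. Then for m with n+1 ≤ m ≤ k, the element Q_n Q_{n-1} ⋯ Q_0 (x_1 ⋯ x_m) is nonzero in R. -/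
/-!
Over any coefficient ring, a derivation `D` with `D (X j) = X j ^ p` acts on coefficients by
`coeff c (D f) = coeff (c.update i 1) f` whenever `c i = p` and every other exponent of `c` is
smaller than `p`: the only summand of `D f = ∑ j, X j ^ p * ∂_j f` that reaches `X^c` is the one
with `j = i`, and there the factor coming from `∂_i` is `0 + 1`. Applying this with
`p = 2 ^ (r + 1)` for `r = 0, …, n` shows that the monomial `x₁² x₂⁴ ⋯ x_{n+1}^{2^{n+1}} x_{n+2} ⋯ x_m`
has coefficient `1` in `Q_n ⋯ Q_0 (x₁ ⋯ x_m)`.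
-/

open MvPolynomial

theorem Derivation.finset_sum_apply {ι R A M : Type*} [CommSemiring R] [CommSemiring A]
    [Algebra R A] [AddCommMonoid M] [Module A M] [Module R M] (s : Finset ι)
    (D : ι → Derivation R A M) (a : A) : (∑ i ∈ s, D i) a = ∑ i ∈ s, D i a := by
  rw [← Derivation.coeFnAddMonoidHom_apply, map_sum, Finset.sum_apply]
  rfl

namespace MvPolynomial

variable {R σ : Type*} [CommSemiring R] [Fintype σ]

theorem derivation_apply_eq_sum_mul_pderiv
    (D : Derivation R (MvPolynomial σ R) (MvPolynomial σ R)) (f : MvPolynomial σ R) :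
    D f = ∑ j, D (X j) * pderiv j f := by
  classical
  have hD : D = ∑ j, D (X j) • pderiv j :=
    derivation_ext fun i => by simp [Derivation.finset_sum_apply, pderiv_X, Pi.single_apply]
  conv_lhs => rw [hD]
  simp [Derivation.finset_sum_apply]

theorem coeff_derivation_of_apply_X_eq_pow [DecidableEq σ]
    (D : Derivation R (MvPolynomial σ R) (MvPolynomial σ R)) {p : ℕ}
    (hD : ∀ j, D (X j) = X j ^ p) {c : σ →₀ ℕ} {i : σ} (hci : c i = p)
    (hc : ∀ j ≠ i, c j < p) (f : MvPolynomial σ R) :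
    coeff c (D f) = coeff (c.update i 1) f := by
  simp only [derivation_apply_eq_sum_mul_pderiv D f, hD, coeff_sum, X_pow_eq_monomial,
    coeff_monomial_mul', one_mul, Finsupp.single_le_iff]
  rw [Finset.sum_eq_single i (fun j _ hj => if_neg (hc j hj).not_ge) (by simp),
    if_pos hci.ge, coeff_pderiv]
  have hupdate : c - Finsupp.single i p + Finsupp.single i 1 = c.update i 1 := by
    ext j
    rcases eq_or_ne j i with rfl | hj <;> simp [Finsupp.update_apply, *]
  simp [hupdate, hci]

end MvPolynomial

/-- The exponent of `x₁² x₂⁴ ⋯ x_r^{2^r} x_{r+1} ⋯ x_m`, the monomial that survives in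
`Q_{r-1} ⋯ Q_0 (x₁ ⋯ x_m)`; variables are indexed from `0`. -/
noncomputable def stageExponent (k m r : ℕ) : Fin k →₀ ℕ :=
  Finsupp.equivFunOnFinite.symm fun j =>
    if (j : ℕ) < m then (if (j : ℕ) < r then 2 ^ ((j : ℕ) + 1) else 1) else 0

section stageExponent

variable {R : Type*} [CommSemiring R] {k m : ℕ}

theorem stageExponent_apply (r : ℕ) (j : Fin k) :
    stageExponent k m r j =
      if (j : ℕ) < m then (if (j : ℕ) < r then 2 ^ ((j : ℕ) + 1) else 1) else 0 := rfl

theorem stageExponent_succ_self {i : Fin k} (hi : (i : ℕ) < m) :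
    stageExponent k m (i + 1) i = 2 ^ ((i : ℕ) + 1) := by
  simp [stageExponent_apply, hi]

theorem stageExponent_succ_lt {i j : Fin k} (hji : j ≠ i) :
    stageExponent k m (i + 1) j < 2 ^ ((i : ℕ) + 1) := by
  have hji' : (j : ℕ) ≠ i := Fin.val_ne_of_ne hji
  simp only [stageExponent_apply]
  split_ifs with hjm hj
  · exact Nat.pow_lt_pow_right one_lt_two (by omega)
  · exact Nat.one_lt_two_pow (by omega)
  · exact Nat.pos_of_ne_zero (by positivity)

theorem update_stageExponent_succ {i : Fin k} (hi : (i : ℕ) < m) :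
    (stageExponent k m (i + 1)).update i 1 = stageExponent k m i := by
  ext j
  rcases eq_or_ne j i with rfl | hji
  · simp [stageExponent_apply, hi]
  · have hji' : (j : ℕ) ≠ i := Fin.val_ne_of_ne hji
    simp only [Finsupp.update_apply, if_neg hji, stageExponent_apply]
    split_ifs <;> omega

theorem prod_X_castLE_eq_monomial (hmk : m ≤ k) :
    (∏ i : Fin m, X (Fin.castLE hmk i) : MvPolynomial (Fin k) R) =
      monomial (stageExponent k m 0) 1 := by
  simp only [X, ← monomial_sum_one]
  refine congrArg (fun s => monomial s (1 : R)) (Finsupp.ext fun j => ?_)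
  rw [Finsupp.finsetSum_apply, stageExponent_apply]
  simp only [Finsupp.single_apply, Fin.ext_iff, Fin.val_castLE, Nat.not_lt_zero, if_false]
  rw [Fin.sum_univ_eq_sum_range (fun i => if i = (j : ℕ) then 1 else 0), Finset.sum_ite_eq']
  simp

theorem coeff_stageExponent_succ {i : Fin k} (hi : (i : ℕ) < m)
    (D : Derivation R (MvPolynomial (Fin k) R) (MvPolynomial (Fin k) R))
    (hD : ∀ j, D (X j) = X j ^ 2 ^ ((i : ℕ) + 1)) (f : MvPolynomial (Fin k) R) :
    coeff (stageExponent k m (i + 1)) (D f) = coeff (stageExponent k m i) f := by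
  rw [coeff_derivation_of_apply_X_eq_pow D hD (stageExponent_succ_self hi)
    (fun _ hj => stageExponent_succ_lt hj), update_stageExponent_succ hi]

theorem coeff_stageExponent_compQ (hmk : m ≤ k)
    (Q : ℕ → Derivation R (MvPolynomial (Fin k) R) (MvPolynomial (Fin k) R))
    (hQ : ∀ (i : ℕ) (j : Fin k), Q i (X j) = X j ^ 2 ^ (i + 1)) {r : ℕ} (hr : r < m)
    (f : MvPolynomial (Fin k) R) :
    coeff (stageExponent k m (r + 1)) (compQ (fun i f => Q i f) r f) =
      coeff (stageExponent k m 0) f := by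
  induction r with
  | zero => exact coeff_stageExponent_succ (i := ⟨0, by omega⟩) hr (Q 0) (hQ 0) f
  | succ r ih =>
    rw [← ih (by omega)]
    exact coeff_stageExponent_succ (i := ⟨r + 1, by omega⟩) hr (Q (r + 1)) (hQ (r + 1)) _

end stageExponent

theorem stmt_7_general (k n m : ℕ) (hnm : n + 1 ≤ m) (hmk : m ≤ k)
    (Q : ℕ → Derivation (ZMod 2) (MvPolynomial (Fin k) (ZMod 2))
      (MvPolynomial (Fin k) (ZMod 2)))
    (hQ : ∀ (i : ℕ) (j : Fin k), Q i (X j) = X j ^ 2 ^ (i + 1)) :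
    compQ (fun i f => Q i f) n (∏ i : Fin m, X (Fin.castLE hmk i)) ≠ 0 := by
  rw [prod_X_castLE_eq_monomial]
  intro h
  have hcoeff := coeff_stageExponent_compQ hmk Q hQ hnm (monomial (stageExponent k m 0) 1)
  rw [h, coeff_zero, coeff_monomial, if_pos rfl] at hcoeff
  exact zero_ne_one hcoeff

theorem stmt_7 (k n m : ℕ) (hkn : n + 1 ≤ k) (hnm : n + 1 ≤ m) (hmk : m ≤ k)
    (Q : ℕ → Derivation (ZMod 2) (MvPolynomial (Fin k) (ZMod 2))
      (MvPolynomial (Fin k) (ZMod 2)))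
    (hQ : ∀ (i : ℕ) (j : Fin k), Q i (X j) = X j ^ 2 ^ (i + 1)) :
    compQ (fun i f => Q i f) n (∏ i : Fin m, X (Fin.castLE hmk i)) ≠ 0 :=
  stmt_7_general k n m hnm hmk Q hQ
end

section
/- Let p be an odd prime and let R = Λ(x_1,...,x_k) ⊗ F_p[y_1,...,y_k] with x_i of odd degree 1 and y_i of even degree 2. Define Q_n as the graded F_p-linear operator satisfying Q_n(ab) = Q_n(a)b + (−1)^{|a|} a Q_n(b), Q_n(x_i) = y_i^{p^n}, Q_n(y_i) = 0. Then for m ≤ n, Q_n Q_{n-1} ⋯ Q_0 (x_1 x_2 ⋯ x_m) = 0. -/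
/-- In the free graded-commutative `F_p`-algebra `Λ(x₁,…,x_k) ⊗ F_p[y₁,…,y_k]` (`p` odd,
`x_i` odd of degree 1, `y_i` even of degree 2), with `Qₙ` the odd graded derivations
(signed Leibniz rule, encoded via the parity involution `σ`) satisfying `Qₙ(xᵢ) = yᵢ^(pⁿ)`
and `Qₙ(yᵢ) = 0`: for `m ≤ n` one has `Qₙ Qₙ₋₁ ⋯ Q₀ (x₁ ⋯ x_m) = 0`. -/
theorem stmt_8 (p : ℕ) (hp : p.Prime) (hodd : Odd p) (k n m : ℕ)
    (hmn : m ≤ n) (hmk : m ≤ k)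
    (R : Type*) [Ring R] [Algebra (ZMod p) R]
    (x y : Fin k → R)
    (hx2 : ∀ i, x i * x i = 0)
    (hanti : ∀ i j, x i * x j = - (x j * x i))
    (hyc : ∀ (i : Fin k) (r : R), Commute (y i) r)
    (σ : R →+* R)
    (hσx : ∀ i, σ (x i) = - x i) (hσy : ∀ i, σ (y i) = y i)
    (Q : ℕ → R →ₗ[ZMod p] R)
    (hL : ∀ (i : ℕ) (a b : R), Q i (a * b) = Q i a * b + σ a * Q i b)
    (hQx : ∀ (i : ℕ) (j : Fin k), Q i (x j) = y j ^ p ^ i)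
    (hQy : ∀ (i : ℕ) (j : Fin k), Q i (y j) = 0) :
    compQ (fun i r => Q i r) n
      ((List.ofFn fun s : Fin m => x (Fin.castLE hmk s)).prod) = 0 := by
  haveI : Fact p.Prime := ⟨hp⟩
  set Yalg := Algebra.adjoin (ZMod p) (Set.range y) with hYalg
  -- Q kills 1
  have hQ1 : ∀ i, Q i 1 = 0 := by
    intro i
    have h := hL i 1 1
    rw [one_mul, σ.map_one, one_mul, mul_one] at h
    exact (left_eq_add.mp h)
  -- σ is the identity on the y-subalgebra
  have hσalg : ∀ r : ZMod p, σ (algebraMap (ZMod p) R r) = algebraMap (ZMod p) R r := by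
    intro r
    exact RingHom.congr_fun (Subsingleton.elim (σ.comp (algebraMap (ZMod p) R))
      (algebraMap (ZMod p) R)) r
  have hσc : ∀ c ∈ Yalg, σ c = c := by
    intro c hc
    induction hc using Algebra.adjoin_induction with
    | mem a ha => obtain ⟨j, rfl⟩ := ha; exact hσy j
    | algebraMap r => exact hσalg r
    | add a b _ _ ha hb => rw [map_add, ha, hb]
    | mul a b _ _ ha hb => rw [map_mul, ha, hb]
  -- Q kills the y-subalgebra
  have hQc : ∀ (i : ℕ), ∀ c ∈ Yalg, Q i c = 0 := by
    intro i c hc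
    induction hc using Algebra.adjoin_induction with
    | mem a ha => obtain ⟨j, rfl⟩ := ha; exact hQy i j
    | algebraMap r =>
      rw [Algebra.algebraMap_eq_smul_one, map_smul, hQ1, smul_zero]
    | add a b _ _ ha hb => rw [map_add, ha, hb, add_zero]
    | mul a b _ _ ha hb => rw [hL, ha, hb, zero_mul, mul_zero, add_zero]
  -- the y-subalgebra is central
  have hcen : ∀ c ∈ Yalg, ∀ r : R, c * r = r * c := by
    intro c hc
    induction hc using Algebra.adjoin_induction with
    | mem a ha => obtain ⟨j, rfl⟩ := ha; exact fun r => (hyc j r).eq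
    | algebraMap r => exact fun s => (Algebra.commutes r s)
    | add a b _ _ ha hb => intro r; rw [add_mul, mul_add, ha, hb]
    | mul a b _ _ ha hb => intro r; rw [mul_assoc, hb, ← mul_assoc, ha, mul_assoc]
  -- the filtration by number of x-factors
  set M : ℕ → Submodule (ZMod p) R := fun t => Submodule.span (ZMod p)
    {r | ∃ c ∈ Yalg, ∃ l : List (Fin k), l.length ≤ t ∧ r = c * (l.map x).prod} with hM
  have hMgen : ∀ (t : ℕ) (c : R), c ∈ Yalg → ∀ l : List (Fin k), l.length ≤ t →
      c * (l.map x).prod ∈ M t := by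
    intro t c hc l hl
    exact Submodule.subset_span ⟨c, hc, l, hl, rfl⟩
  have hMmono : ∀ s t : ℕ, s ≤ t → M s ≤ M t := by
    intro s t hst
    apply Submodule.span_mono
    rintro r ⟨c, hc, l, hl, rfl⟩
    exact ⟨c, hc, l, hl.trans hst, rfl⟩
  -- multiplication by central y-elements preserves the filtration
  have hmulY : ∀ c ∈ Yalg, ∀ t : ℕ, ∀ a ∈ M t, c * a ∈ M t := by
    intro c hc t a ha
    induction ha using Submodule.span_induction with
    | mem r hr =>
      obtain ⟨c', hc', l, hl, rfl⟩ := hr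
      rw [← mul_assoc]
      exact hMgen t (c * c') (mul_mem hc hc') l hl
    | zero => rw [mul_zero]; exact zero_mem _
    | add a b _ _ ha hb => rw [mul_add]; exact add_mem ha hb
    | smul r a _ ha => rw [mul_smul_comm]; exact Submodule.smul_mem _ r ha
  -- multiplication by an x raises the filtration by one
  have hmulX : ∀ (j : Fin k) (t : ℕ), ∀ a ∈ M t, x j * a ∈ M (t + 1) := by
    intro j t a ha
    induction ha using Submodule.span_induction with
    | mem r hr =>
      obtain ⟨c, hc, l, hl, rfl⟩ := hr
      have : x j * (c * (l.map x).prod) = c * ((j :: l).map x).prod := by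
        rw [List.map_cons, List.prod_cons, ← mul_assoc,
          show x j * c = c * x j from (hcen c hc (x j)).symm, mul_assoc]
      rw [this]
      exact hMgen (t + 1) c hc (j :: l) (by simpa using Nat.succ_le_succ hl)
    | zero => rw [mul_zero]; exact zero_mem _
    | add a b _ _ ha hb => rw [mul_add]; exact add_mem ha hb
    | smul r a _ ha => rw [mul_smul_comm]; exact Submodule.smul_mem _ r ha
  -- Q of a product of x's lies one step down
  have hQprod : ∀ (i : ℕ) (l : List (Fin k)),
      Q i ((l.map x).prod) ∈ M (l.length - 1) := by
    intro i l
    induction l with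
    | nil => simp only [List.map_nil, List.prod_nil, hQ1]; exact zero_mem _
    | cons j l ih =>
      rw [List.map_cons, List.prod_cons, hL, hQx, hσx]
      have h1 : y j ^ p ^ i * (l.map x).prod ∈ M l.length := by
        have hy : y j ^ p ^ i ∈ Yalg :=
          pow_mem (Algebra.subset_adjoin (Set.mem_range_self j)) _
        have := hMgen l.length (y j ^ p ^ i) hy l le_rfl
        simpa using this
      have h2 : -x j * Q i ((l.map x).prod) ∈ M l.length := by
        cases l with
        | nil =>
          simp only [List.map_nil, List.prod_nil, hQ1, mul_zero]
          exact zero_mem _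
        | cons j' l' =>
          rw [neg_mul]
          refine neg_mem ?_
          have := hmulX j _ _ ih
          simpa using this
      have hlen : (j :: l).length - 1 = l.length := by simp
      rw [hlen]
      exact add_mem h1 h2
  -- Q lowers the filtration by one
  have hQM : ∀ (i t : ℕ), ∀ a ∈ M t, Q i a ∈ M (t - 1) := by
    intro i t a ha
    induction ha using Submodule.span_induction with
    | mem r hr =>
      obtain ⟨c, hc, l, hl, rfl⟩ := hr
      rw [hL, hQc i c hc, zero_mul, zero_add, hσc c hc]
      exact hmulY c hc _ _ (hMmono _ _ (Nat.sub_le_sub_right hl 1) (hQprod i l))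
    | zero => rw [map_zero]; exact zero_mem _
    | add a b _ _ ha hb => rw [map_add]; exact add_mem ha hb
    | smul r a _ ha => rw [map_smul]; exact Submodule.smul_mem _ r ha
  -- Q kills the bottom filtration step
  have hQM0 : ∀ (i : ℕ), ∀ a ∈ M 0, Q i a = 0 := by
    intro i a ha
    induction ha using Submodule.span_induction with
    | mem r hr =>
      obtain ⟨c, hc, l, hl, rfl⟩ := hr
      rw [List.length_eq_zero_iff.mp (Nat.le_zero.mp hl)]
      simpa using hQc i c hc
    | zero => exact map_zero _
    | add a b _ _ ha hb => rw [map_add, ha, hb, add_zero]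
    | smul r a _ ha => rw [map_smul, ha, smul_zero]
  -- the composite lowers filtration
  have hcomp : ∀ (n t : ℕ), ∀ a ∈ M t, compQ (fun i r => Q i r) n a ∈ M (t - (n + 1)) := by
    intro n
    induction n with
    | zero => intro t a ha; exact hQM 0 t a ha
    | succ n ih =>
      intro t a ha
      show Q (n + 1) (compQ (fun i r => Q i r) n a) ∈ _
      have := hQM (n + 1) _ _ (ih t a ha)
      rwa [Nat.sub_sub] at this
  -- the product of the first m x's lies in M m
  have hXm : (List.ofFn fun s : Fin m => x (Fin.castLE hmk s)).prod ∈ M m := by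
    have h := hMgen m 1 (one_mem _) (List.ofFn (Fin.castLE hmk)) (by simp)
    rw [one_mul, List.map_ofFn] at h
    exact h
  -- conclude
  cases n with
  | zero =>
    have hm0 : m = 0 := Nat.le_zero.mp hmn
    subst hm0
    exact hQM0 0 _ hXm
  | succ n' =>
    show Q (n' + 1) (compQ (fun i r => Q i r) n' _) = 0
    apply hQM0 (n' + 1)
    have := hcomp n' m _ hXm
    rwa [Nat.sub_eq_zero_of_le hmn] at this
end

section
/- Let p be an odd prime and R = Λ(x_1,...,x_k) ⊗ F_p[y_1,...,y_k] with k ≥ n+1. Let Q_i be the odd graded derivation with Q_i(x_j) = y_j^{p^i} and Q_i(y_j) = 0. Then for m with n+1 ≤ m ≤ k, the element Q_n Q_{n-1} ⋯ Q_0 (x_1 ⋯ x_m) is nonzero in R. -/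
open scoped TensorProduct

/-- The free graded-commutative `F_p`-algebra `Λ(x₁,…,x_k) ⊗ F_p[y₁,…,y_k]`. -/
abbrev FreeGC (p k : ℕ) [Fact p.Prime] : Type :=
  ExteriorAlgebra (ZMod p) (Fin k → ZMod p) ⊗[ZMod p] MvPolynomial (Fin k) (ZMod p)

/-- The odd degree-one generators `xᵢ`. -/
noncomputable def xGen (p k : ℕ) [Fact p.Prime] (i : Fin k) : FreeGC p k :=
  (ExteriorAlgebra.ι (ZMod p) (Pi.single i 1)) ⊗ₜ 1

/-- The even degree-two generators `yᵢ`. -/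
noncomputable def yGen (p k : ℕ) [Fact p.Prime] (i : Fin k) : FreeGC p k :=
  1 ⊗ₜ MvPolynomial.X i

/-!
A `σ`-derivation `Q` of `Λ(x) ⊗ F_p[y]` with `Q xⱼ = yⱼ^N` and `Q yⱼ = 0` is `∑ⱼ ∂ⱼ ⊗ yⱼ^N`,
where `∂ⱼ` is contraction with the `j`-th coordinate on the exterior factor: both sides are
determined by their values on products of the `xⱼ`. Take the coefficient of the monomial
`y₀ y₁^p ⋯ y_{s-1}^{p^{s-1}}` (an element of the exterior algebra). The exponents `p^j`, `j < s`,
are all smaller than `p^s`, so `Q_s` can reach the next such monomial only through the factor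
`y_s^{p^s}`; on these coefficients `Q_s` therefore acts as `∂_s`. Hence the coefficient of
`y₀ y₁^p ⋯ yₙ^{p^n}` in `Qₙ ⋯ Q₀ (x₀ ⋯ x_{m-1})` is `∂ₙ ⋯ ∂₀ (x₀ ⋯ x_{m-1}) = x_{n+1} ⋯ x_{m-1}`,
and a product of distinct basis vectors of the exterior algebra is nonzero.
-/

namespace ExteriorAlgebra

variable {R I : Type*} [CommRing R] [DecidableEq I]

noncomputable def basisProd (l : List I) : ExteriorAlgebra R (I → R) :=
  (l.map fun j => ι R (Pi.single j 1)).prod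

@[simp]
theorem basisProd_nil : basisProd (R := R) ([] : List I) = 1 := rfl

theorem basisProd_cons (j : I) (l : List I) :
    basisProd (R := R) (j :: l) = ι R (Pi.single j 1) * basisProd l := rfl

theorem basisProd_append (l₁ l₂ : List I) :
    basisProd (R := R) (l₁ ++ l₂) = basisProd l₁ * basisProd l₂ := by
  simp [basisProd]

theorem contractLeft_proj_basisProd_cons (i j : I) (l : List I) :
    CliffordAlgebra.contractLeft (LinearMap.proj i) (basisProd (R := R) (j :: l)) =
      Pi.single (M := fun _ => R) j 1 i • basisProd l -
        ι R (Pi.single j 1) * CliffordAlgebra.contractLeft (LinearMap.proj i) (basisProd l) :=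
  CliffordAlgebra.contractLeft_ι_mul _ _ _

theorem contractLeft_proj_basisProd_of_notMem {j : I} {l : List I} (hj : j ∉ l) :
    CliffordAlgebra.contractLeft (LinearMap.proj j) (basisProd (R := R) l) = 0 := by
  induction l with
  | nil => exact CliffordAlgebra.contractLeft_one _ _
  | cons i l ih =>
    rw [List.mem_cons, not_or] at hj
    rw [contractLeft_proj_basisProd_cons, ih hj.2, Pi.single_eq_of_ne hj.1]
    simp

theorem contractLeft_proj_basisProd_cons_self {j : I} {l : List I} (hj : j ∉ l) :
    CliffordAlgebra.contractLeft (LinearMap.proj j) (basisProd (R := R) (j :: l)) =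
      basisProd l := by
  rw [contractLeft_proj_basisProd_cons, contractLeft_proj_basisProd_of_notMem hj]
  simp

theorem basisProd_ne_zero [Nontrivial R] {l : List I} (hl : l.Nodup) :
    basisProd (R := R) l ≠ 0 := by
  induction l with
  | nil => exact one_ne_zero
  | cons j l ih =>
    intro h
    apply ih (List.nodup_cons.1 hl).2
    rw [← contractLeft_proj_basisProd_cons_self (List.nodup_cons.1 hl).1, h, map_zero]

theorem span_range_basisProd [Fintype I] :
    Submodule.span R (Set.range (basisProd (R := R) (I := I))) = ⊤ := by
  refine Submodule.eq_top_iff'.2 fun a => ?_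
  induction a using ExteriorAlgebra.induction with
  | algebraMap r =>
    rw [Algebra.algebraMap_eq_smul_one]
    exact Submodule.smul_mem _ r (Submodule.subset_span ⟨[], rfl⟩)
  | ι x =>
    rw [← Finset.univ_sum_single x, map_sum]
    refine Submodule.sum_mem _ fun j _ => ?_
    rw [← mul_one (x j), ← smul_eq_mul, Pi.single_smul', map_smul]
    exact Submodule.smul_mem _ _ (Submodule.subset_span ⟨[j], mul_one _⟩)
  | mul a b ha hb =>
    have hab := Submodule.mul_mem_mul ha hb
    rw [Submodule.span_mul_span] at hab
    refine Submodule.span_mono ?_ hab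
    rintro _ ⟨_, ⟨l₁, rfl⟩, _, ⟨l₂, rfl⟩, rfl⟩
    exact ⟨l₁ ++ l₂, basisProd_append l₁ l₂⟩
  | add a b ha hb => exact add_mem ha hb

theorem contractLeft_proj_basisProd_drop {l : List I} (hl : l.Nodup) {r : ℕ} (hr : r < l.length) :
    CliffordAlgebra.contractLeft (LinearMap.proj l[r]) (basisProd (R := R) (l.drop r)) =
      basisProd (l.drop (r + 1)) := by
  have hdrop := hl.sublist (List.drop_sublist r l)
  rw [List.drop_eq_getElem_cons hr] at hdrop ⊢
  exact contractLeft_proj_basisProd_cons_self (List.nodup_cons.1 hdrop).1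

theorem contractLeft_proj_basisProd_drop_ofFn_castLE {m k r : ℕ} (hmk : m ≤ k) (hr : r < m) :
    CliffordAlgebra.contractLeft (LinearMap.proj ⟨r, hr.trans_le hmk⟩)
        (basisProd (R := R) ((List.ofFn (Fin.castLE hmk)).drop r)) =
      basisProd ((List.ofFn (Fin.castLE hmk)).drop (r + 1)) := by
  have hr' : r < (List.ofFn (Fin.castLE hmk)).length := by rwa [List.length_ofFn]
  have hget : (List.ofFn (Fin.castLE hmk))[r] = ⟨r, hr.trans_le hmk⟩ := by
    rw [List.getElem_ofFn]
    rfl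
  rw [← hget]
  exact contractLeft_proj_basisProd_drop (List.nodup_ofFn.2 (Fin.castLE_injective hmk)) hr'

end ExteriorAlgebra

namespace FreeGC

open ExteriorAlgebra MvPolynomial

variable {k : ℕ}

noncomputable def powerExponent (b s : ℕ) : Fin k →₀ ℕ :=
  Finsupp.equivFunOnFinite.symm fun j => if (j : ℕ) < s then b ^ (j : ℕ) else 0

theorem powerExponent_apply (b s : ℕ) (j : Fin k) :
    powerExponent b s j = if (j : ℕ) < s then b ^ (j : ℕ) else 0 := rfl

@[simp]
theorem powerExponent_zero (b : ℕ) : powerExponent b 0 = (0 : Fin k →₀ ℕ) := by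
  ext j
  simp [powerExponent_apply]

theorem single_le_powerExponent_succ_iff {b : ℕ} (hb : 1 < b) (s : ℕ) (j : Fin k) :
    Finsupp.single j (b ^ s) ≤ powerExponent b (s + 1) ↔ (j : ℕ) = s := by
  rw [Finsupp.single_le_iff, powerExponent_apply]
  split_ifs with hj
  · rw [Nat.pow_le_pow_iff_right hb]
    omega
  · simp only [nonpos_iff_eq_zero, pow_eq_zero_iff']
    omega

theorem powerExponent_succ_sub_single (b : ℕ) {s : ℕ} (hs : s < k) :
    powerExponent b (s + 1) - Finsupp.single ⟨s, hs⟩ (b ^ s) = powerExponent (k := k) b s := by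
  ext j
  simp only [Finsupp.coe_tsub, Pi.sub_apply, powerExponent_apply, Finsupp.single_apply, Fin.ext_iff]
  by_cases hj : (j : ℕ) = s
  · simp [hj]
  · simp [Ne.symm hj, show (j : ℕ) < s + 1 ↔ (j : ℕ) < s by omega]

variable {p : ℕ} [Fact p.Prime]

noncomputable def milnorDerivation (N : ℕ) : FreeGC p k →ₗ[ZMod p] FreeGC p k :=
  ∑ j, TensorProduct.map (CliffordAlgebra.contractLeft (LinearMap.proj j))
    (LinearMap.mulLeft (ZMod p) (monomial (Finsupp.single j N) 1))

theorem milnorDerivation_tmul (N : ℕ) (a : ExteriorAlgebra (ZMod p) (Fin k → ZMod p))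
    (P : MvPolynomial (Fin k) (ZMod p)) :
    milnorDerivation N (a ⊗ₜ P) = ∑ j, CliffordAlgebra.contractLeft (LinearMap.proj j) a ⊗ₜ
      (monomial (Finsupp.single j N) 1 * P) := by
  simp [milnorDerivation]

noncomputable def coeffY (d : Fin k →₀ ℕ) :
    FreeGC p k →ₗ[ZMod p] ExteriorAlgebra (ZMod p) (Fin k → ZMod p) :=
  (TensorProduct.rid _ _).toLinearMap ∘ₗ (lcoeff (ZMod p) d).lTensor _

@[simp]
theorem coeffY_tmul (d : Fin k →₀ ℕ) (a : ExteriorAlgebra (ZMod p) (Fin k → ZMod p))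
    (P : MvPolynomial (Fin k) (ZMod p)) : coeffY d (a ⊗ₜ P) = coeff d P • a := by
  simp [coeffY]

theorem xGen_list_prod (l : List (Fin k)) :
    (l.map (xGen p k)).prod = basisProd l ⊗ₜ 1 := by
  induction l with
  | nil => rfl
  | cons j l ih =>
    rw [List.map_cons, List.prod_cons, ih, basisProd_cons, xGen,
      Algebra.TensorProduct.tmul_mul_tmul, one_mul]

theorem xGen_mul_tmul (j : Fin k) (a : ExteriorAlgebra (ZMod p) (Fin k → ZMod p))
    (P : MvPolynomial (Fin k) (ZMod p)) :
    xGen p k j * (a ⊗ₜ P) = (ι (ZMod p) (Pi.single j 1) * a) ⊗ₜ P := by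
  rw [xGen, Algebra.TensorProduct.tmul_mul_tmul, one_mul]

section LeibnizRule

variable (σ : FreeGC p k →+* FreeGC p k) {Q : FreeGC p k →ₗ[ZMod p] FreeGC p k}

theorem map_one_eq_zero (hL : ∀ a b, Q (a * b) = Q a * b + σ a * Q b) : Q 1 = 0 := by
  simpa using hL 1 1

theorem map_one_tmul_eq_zero (hL : ∀ a b, Q (a * b) = Q a * b + σ a * Q b)
    (hQy : ∀ j, Q (yGen p k j) = 0) (P : MvPolynomial (Fin k) (ZMod p)) : Q (1 ⊗ₜ P) = 0 := by
  induction P using MvPolynomial.induction_on with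
  | C r =>
    rw [← mul_one (C r), ← smul_eq_C_mul, TensorProduct.tmul_smul, map_smul,
      ← Algebra.TensorProduct.one_def, map_one_eq_zero σ hL, smul_zero]
  | add P P' hP hP' => rw [TensorProduct.tmul_add, map_add, hP, hP', add_zero]
  | mul_X P j hP =>
    rw [← one_mul (1 : ExteriorAlgebra _ _), ← Algebra.TensorProduct.tmul_mul_tmul, hL, hP,
      ← yGen, hQy, zero_mul, mul_zero, add_zero]

theorem map_tmul_eq_mul (hL : ∀ a b, Q (a * b) = Q a * b + σ a * Q b)
    (hQy : ∀ j, Q (yGen p k j) = 0) (a : ExteriorAlgebra (ZMod p) (Fin k → ZMod p))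
    (P : MvPolynomial (Fin k) (ZMod p)) : Q (a ⊗ₜ P) = Q (a ⊗ₜ 1) * (1 ⊗ₜ P) := by
  conv_lhs => rw [← mul_one a, ← one_mul P, ← Algebra.TensorProduct.tmul_mul_tmul]
  rw [hL, map_one_tmul_eq_zero σ hL hQy, mul_zero, add_zero]

theorem map_basisProd_tmul_one {N : ℕ} (hL : ∀ a b, Q (a * b) = Q a * b + σ a * Q b)
    (hσx : ∀ j, σ (xGen p k j) = -xGen p k j) (hQx : ∀ j, Q (xGen p k j) = yGen p k j ^ N)
    (l : List (Fin k)) : Q (basisProd l ⊗ₜ 1) = milnorDerivation N (basisProd l ⊗ₜ 1) := by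
  induction l with
  | nil =>
    rw [basisProd_nil, ← Algebra.TensorProduct.one_def, map_one_eq_zero σ hL,
      Algebra.TensorProduct.one_def, milnorDerivation_tmul]
    simp
  | cons j l ih =>
    simp only [milnorDerivation_tmul, contractLeft_proj_basisProd_cons]
    rw [basisProd_cons, ← xGen_mul_tmul, hL, hσx, hQx, ih, milnorDerivation_tmul,
      neg_mul (xGen p k j), Finset.mul_sum, yGen, Algebra.TensorProduct.tmul_pow]
    simp only [xGen_mul_tmul, Pi.single_apply, ite_smul, one_smul, zero_smul, sub_eq_add_neg,
      TensorProduct.add_tmul, TensorProduct.neg_tmul, TensorProduct.ite_tmul, Finset.sum_add_distrib,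
      Finset.sum_ite_eq', Finset.mem_univ, if_true, Finset.sum_neg_distrib,
      Algebra.TensorProduct.tmul_mul_tmul, one_mul, one_pow, mul_one, X_pow_eq_monomial]

theorem eq_milnorDerivation {N : ℕ} (hL : ∀ a b, Q (a * b) = Q a * b + σ a * Q b)
    (hσx : ∀ j, σ (xGen p k j) = -xGen p k j) (hQx : ∀ j, Q (xGen p k j) = yGen p k j ^ N)
    (hQy : ∀ j, Q (yGen p k j) = 0) : Q = milnorDerivation N := by
  have hone : Q ∘ₗ (TensorProduct.mk _ _ _).flip 1 =
      milnorDerivation N ∘ₗ (TensorProduct.mk _ _ (MvPolynomial (Fin k) (ZMod p))).flip 1 :=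
    LinearMap.ext_on_range span_range_basisProd (map_basisProd_tmul_one σ hL hσx hQx)
  refine TensorProduct.ext' fun a P => ?_
  have ha := LinearMap.congr_fun hone a
  simp only [LinearMap.comp_apply, LinearMap.flip_apply, TensorProduct.mk_apply] at ha
  rw [map_tmul_eq_mul σ hL hQy, ha, milnorDerivation_tmul, milnorDerivation_tmul, Finset.sum_mul]
  simp only [Algebra.TensorProduct.tmul_mul_tmul, mul_one]

end LeibnizRule

theorem coeffY_milnorDerivation {s : ℕ} (hs : s < k) (z : FreeGC p k) :
    coeffY (powerExponent p (s + 1)) (milnorDerivation (p ^ s) z) =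
      CliffordAlgebra.contractLeft (LinearMap.proj ⟨s, hs⟩) (coeffY (powerExponent p s) z) := by
  have hp : 1 < p := (Fact.out : p.Prime).one_lt
  suffices h : coeffY (powerExponent p (s + 1)) ∘ₗ milnorDerivation (p ^ s) =
      CliffordAlgebra.contractLeft (LinearMap.proj ⟨s, hs⟩) ∘ₗ coeffY (powerExponent p s) from
    LinearMap.congr_fun h z
  refine TensorProduct.ext' fun a P => ?_
  simp only [LinearMap.comp_apply, milnorDerivation_tmul, map_sum, coeffY_tmul,
    coeff_monomial_mul', one_mul, map_smul]
  rw [Finset.sum_eq_single ⟨s, hs⟩]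
  · rw [if_pos ((single_le_powerExponent_succ_iff hp s _).2 rfl), powerExponent_succ_sub_single]
  · intro j _ hj
    rw [if_neg fun h => hj (Fin.ext ((single_le_powerExponent_succ_iff hp s j).1 h)), zero_smul]
  · simp

theorem coeffY_compQ_milnorDerivation {m : ℕ} (hmk : m ≤ k) {r : ℕ} (hr : r < m) :
    coeffY (powerExponent p (r + 1))
        (compQ (fun i z => milnorDerivation (p ^ i) z) r
          (basisProd (List.ofFn (Fin.castLE hmk)) ⊗ₜ (1 : MvPolynomial (Fin k) (ZMod p)))) =
      basisProd ((List.ofFn (Fin.castLE hmk)).drop (r + 1)) := by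
  induction r with
  | zero =>
    rw [compQ, coeffY_milnorDerivation (by omega), powerExponent_zero, coeffY_tmul, coeff_zero_one,
      one_smul, ← contractLeft_proj_basisProd_drop_ofFn_castLE hmk hr, List.drop_zero]
  | succ r ih =>
    rw [compQ, Function.comp_apply, coeffY_milnorDerivation (by omega), ih (by omega),
      contractLeft_proj_basisProd_drop_ofFn_castLE hmk hr]

end FreeGC

theorem stmt_10_general (p : ℕ) [Fact p.Prime] (k n m : ℕ)
    (hnm : n + 1 ≤ m) (hmk : m ≤ k)
    (σ : FreeGC p k →+* FreeGC p k)
    (hσx : ∀ i, σ (xGen p k i) = - xGen p k i)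
    (Q : ℕ → FreeGC p k →ₗ[ZMod p] FreeGC p k)
    (hL : ∀ (i : ℕ) (a b : FreeGC p k), Q i (a * b) = Q i a * b + σ a * Q i b)
    (hQx : ∀ (i : ℕ) (j : Fin k), Q i (xGen p k j) = yGen p k j ^ p ^ i)
    (hQy : ∀ (i : ℕ) (j : Fin k), Q i (yGen p k j) = 0) :
    compQ (fun i r => Q i r) n
      ((List.ofFn fun s : Fin m => xGen p k (Fin.castLE hmk s)).prod) ≠ 0 := by
  have hQ : (fun i r => Q i r) = fun i r => FreeGC.milnorDerivation (p ^ i) r := by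
    funext i r
    rw [FreeGC.eq_milnorDerivation σ (hL i) hσx (hQx i) (hQy i)]
  have hx : (List.ofFn fun s : Fin m => xGen p k (Fin.castLE hmk s)).prod =
      ExteriorAlgebra.basisProd (List.ofFn (Fin.castLE hmk)) ⊗ₜ 1 := by
    rw [← FreeGC.xGen_list_prod, List.map_ofFn]
    rfl
  have hcoeff := FreeGC.coeffY_compQ_milnorDerivation (p := p) hmk hnm
  rw [hQ, hx]
  intro h
  rw [h, map_zero] at hcoeff
  exact ExteriorAlgebra.basisProd_ne_zero
    ((List.nodup_ofFn.2 (Fin.castLE_injective hmk)).sublist (List.drop_sublist _ _)) hcoeff.symm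

theorem stmt_10 (p : ℕ) [Fact p.Prime] (hodd : Odd p) (k n m : ℕ)
    (hkn : n + 1 ≤ k) (hnm : n + 1 ≤ m) (hmk : m ≤ k)
    (σ : FreeGC p k →+* FreeGC p k)
    (hσx : ∀ i, σ (xGen p k i) = - xGen p k i)
    (hσy : ∀ i, σ (yGen p k i) = yGen p k i)
    (Q : ℕ → FreeGC p k →ₗ[ZMod p] FreeGC p k)
    (hL : ∀ (i : ℕ) (a b : FreeGC p k), Q i (a * b) = Q i a * b + σ a * Q i b)
    (hQx : ∀ (i : ℕ) (j : Fin k), Q i (xGen p k j) = yGen p k j ^ p ^ i)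
    (hQy : ∀ (i : ℕ) (j : Fin k), Q i (yGen p k j) = 0) :
    compQ (fun i r => Q i r) n
      ((List.ofFn fun s : Fin m => xGen p k (Fin.castLE hmk s)).prod) ≠ 0 :=
  stmt_10_general p k n m hnm hmk σ hσx Q hL hQx hQy
end
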